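/- arXiv:1207.3240 — 4 statements merged into one kernel-verified Lean document; each statement's English description precedes it below -/
import Mathlib

section
/- Let A be a self-adjoint operator on a two-dimensional inner product space with largest and smallest eigenvalues λ_max and λ_min, and a unit eigenvector u. For nonzero vectors x and y with ∠{x,y}>0, one has (λ_max − λ_min)·|sin(∠{x,u} − ∠{y,u})|·sin(∠{x,y}) ≤ |ρ(x) − ρ(y)| ≤ (λ_max − λ_min)·sin(∠{x,u} + ∠{y,u})·sin(∠{x,y}). -/
/-!
In an orthonormal eigenbasis `u, v` write `x = a u + b v` and `y = c u + d v`. Then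
`cos ∠{x,u} = |a|/‖x‖`, `sin ∠{x,u} = |b|/‖x‖`, Lagrange's identity gives
`sin ∠{x,y} = |ad - bc|/(‖x‖‖y‖)`, and `ρ(x) - ρ(y) = (μ - ν)((ad)² - (bc)²)/(‖x‖‖y‖)²`.
With `p = ad`, `q = bc` both bounds follow from `p² - q² = (p + q)(p - q)` and
`||q| - |p|| ≤ |p + q| ≤ |q| + |p|`.
-/

open scoped RealInnerProductSpace
open Submodule

noncomputable section

variable {H : Type*} [NormedAddCommGroup H] [InnerProductSpace ℝ H]

/-- The Rayleigh quotient of `x` with respect to `A`. -/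
def rq (A : H →L[ℝ] H) (x : H) : ℝ := ⟪x, A x⟫ / ⟪x, x⟫

/-- The residual of `x` with respect to `A`. -/
def res (A : H →L[ℝ] H) (x : H) : H := A x - rq A x • x

/-- The acute angle between two vectors. -/
def ang (x y : H) : ℝ := Real.arccos (|⟪x, y⟫| / (‖x‖ * ‖y‖))

open Real InnerProductGeometry

lemma cos_ang (x y : H) : cos (ang x y) = |⟪x, y⟫| / (‖x‖ * ‖y‖) := by
  have h := abs_real_inner_div_norm_mul_norm_le_one x y
  rw [abs_div, abs_of_nonneg (by positivity : 0 ≤ ‖x‖ * ‖y‖)] at h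
  exact cos_arccos (neg_one_lt_zero.le.trans (by positivity)) h

lemma sin_ang_eq_sin_angle (x y : H) : sin (ang x y) = sin (angle x y) := by
  rw [ang, angle]
  rcases le_total 0 ⟪x, y⟫ with h | h
  · rw [abs_of_nonneg h]
  · rw [abs_of_nonpos h, neg_div, arccos_neg, sin_pi_sub]

lemma abs_abs_sub_abs_mul_abs_sub_le_abs_sq_sub_sq (p q : ℝ) :
    |(|q| - |p|)| * |p - q| ≤ |p ^ 2 - q ^ 2| := by
  have h : |(|q| - |p|)| ≤ |p + q| := by
    simpa [abs_neg, add_comm] using abs_abs_sub_abs_le_abs_sub q (-p)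
  calc |(|q| - |p|)| * |p - q| ≤ |p + q| * |p - q| := by gcongr
    _ = |p ^ 2 - q ^ 2| := by rw [← abs_mul]; ring_nf

lemma abs_sq_sub_sq_le_add_mul_abs_sub (p q : ℝ) :
    |p ^ 2 - q ^ 2| ≤ (|q| + |p|) * |p - q| := by
  calc |p ^ 2 - q ^ 2| = |p + q| * |p - q| := by rw [← abs_mul]; ring_nf
    _ ≤ (|q| + |p|) * |p - q| := by gcongr; rw [add_comm |q|]; exact abs_add_le p q

lemma exists_orthonormalBasis_fin_two (hdim : Module.finrank ℝ H = 2) {u v : H}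
    (hu : ‖u‖ = 1) (hv : ‖v‖ = 1) (huv : ⟪u, v⟫ = 0) :
    ∃ b : OrthonormalBasis (Fin 2) ℝ H, b 0 = u ∧ b 1 = v := by
  have hon : Orthonormal ℝ ![u, v] := by
    rw [orthonormal_iff_ite]
    intro i j
    fin_cases i <;> fin_cases j <;> simp [huv, real_inner_comm u v, hu, hv]
  let e := basisOfOrthonormalOfCardEqFinrank hon (by simp [hdim])
  exact ⟨e.toOrthonormalBasis (by simpa [e] using hon), by simp [e], by simp [e]⟩

section OrthonormalBasis

variable (b : OrthonormalBasis (Fin 2) ℝ H)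

lemma real_inner_eq_fin_two (x y : H) :
    ⟪x, y⟫ = ⟪b 0, x⟫ * ⟪b 0, y⟫ + ⟪b 1, x⟫ * ⟪b 1, y⟫ := by
  rw [← b.sum_inner_mul_inner, Fin.sum_univ_two, real_inner_comm x, real_inner_comm x]

lemma norm_sq_eq_fin_two (x : H) : ‖x‖ ^ 2 = ⟪b 0, x⟫ ^ 2 + ⟪b 1, x⟫ ^ 2 := by
  rw [← real_inner_self_eq_norm_sq, real_inner_eq_fin_two b]; ring

lemma sin_ang_eq_fin_two {x y : H} (hx : x ≠ 0) (hy : y ≠ 0) :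
    sin (ang x y) = |⟪b 0, x⟫ * ⟪b 1, y⟫ - ⟪b 1, x⟫ * ⟪b 0, y⟫| / (‖x‖ * ‖y‖) := by
  have hlagrange : ⟪x, x⟫ * ⟪y, y⟫ - ⟪x, y⟫ * ⟪x, y⟫
      = (⟪b 0, x⟫ * ⟪b 1, y⟫ - ⟪b 1, x⟫ * ⟪b 0, y⟫) ^ 2 := by
    simp only [real_inner_eq_fin_two b x, real_inner_eq_fin_two b y]; ring
  rw [sin_ang_eq_sin_angle, eq_div_iff (by positivity), sin_angle_mul_norm_mul_norm, hlagrange,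
    sqrt_sq_eq_abs]

lemma cos_ang_basis_zero {x : H} : cos (ang x (b 0)) = |⟪b 0, x⟫| / ‖x‖ := by
  rw [cos_ang, b.norm_eq_one, mul_one, real_inner_comm]

lemma sin_ang_basis_zero {x : H} (hx : x ≠ 0) : sin (ang x (b 0)) = |⟪b 1, x⟫| / ‖x‖ := by
  rw [sin_ang_eq_fin_two b hx (b.orthonormal.ne_zero 0)]
  simp

lemma real_inner_apply_self_of_eigen {A : H →L[ℝ] H} {μ ν : ℝ} (h₀ : A (b 0) = μ • b 0)
    (h₁ : A (b 1) = ν • b 1) (x : H) : ⟪x, A x⟫ = μ * ⟪b 0, x⟫ ^ 2 + ν * ⟪b 1, x⟫ ^ 2 := by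
  conv_lhs => rw [← b.sum_repr' x]
  simp only [Fin.sum_univ_two, map_add, map_smul, h₀, h₁, inner_add_left, inner_add_right,
    real_inner_smul_left, real_inner_smul_right, b.inner_eq_one, b.inner_eq_zero zero_ne_one,
    b.inner_eq_zero one_ne_zero]
  ring

lemma rq_sub_rq_of_eigen {A : H →L[ℝ] H} {μ ν : ℝ} (h₀ : A (b 0) = μ • b 0)
    (h₁ : A (b 1) = ν • b 1) {x y : H} (hx : x ≠ 0) (hy : y ≠ 0) :
    rq A x - rq A y = (μ - ν) * ((⟪b 0, x⟫ * ⟪b 1, y⟫) ^ 2 - (⟪b 1, x⟫ * ⟪b 0, y⟫) ^ 2)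
      / (‖x‖ * ‖y‖) ^ 2 := by
  have hx2 := norm_sq_eq_fin_two b x
  have hy2 := norm_sq_eq_fin_two b y
  have hx₀ : ‖x‖ ≠ 0 := norm_ne_zero_iff.mpr hx
  have hy₀ : ‖y‖ ≠ 0 := norm_ne_zero_iff.mpr hy
  rw [rq, rq, real_inner_apply_self_of_eigen b h₀ h₁, real_inner_apply_self_of_eigen b h₀ h₁,
    real_inner_self_eq_norm_sq, real_inner_self_eq_norm_sq]
  field_simp
  rw [hx2, hy2]
  ring

theorem abs_rq_sub_rq_bounds_of_eigen {A : H →L[ℝ] H} {μ ν : ℝ} (h₀ : A (b 0) = μ • b 0)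
    (h₁ : A (b 1) = ν • b 1) {x y : H} (hx : x ≠ 0) (hy : y ≠ 0) :
    |μ - ν| * |sin (ang x (b 0) - ang y (b 0))| * sin (ang x y) ≤ |rq A x - rq A y| ∧
    |rq A x - rq A y| ≤ |μ - ν| * sin (ang x (b 0) + ang y (b 0)) * sin (ang x y) := by
  have hxy : 0 < ‖x‖ * ‖y‖ := by positivity
  have hsub : sin (ang x (b 0) - ang y (b 0))
      = (|⟪b 1, x⟫ * ⟪b 0, y⟫| - |⟪b 0, x⟫ * ⟪b 1, y⟫|) / (‖x‖ * ‖y‖) := by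
    rw [sin_sub, sin_ang_basis_zero b hx, sin_ang_basis_zero b hy, cos_ang_basis_zero,
      cos_ang_basis_zero, abs_mul, abs_mul]
    field_simp
  have hadd : sin (ang x (b 0) + ang y (b 0))
      = (|⟪b 1, x⟫ * ⟪b 0, y⟫| + |⟪b 0, x⟫ * ⟪b 1, y⟫|) / (‖x‖ * ‖y‖) := by
    rw [sin_add, sin_ang_basis_zero b hx, sin_ang_basis_zero b hy, cos_ang_basis_zero,
      cos_ang_basis_zero, abs_mul, abs_mul]
    field_simp
  have hk : 0 ≤ |μ - ν| / (‖x‖ * ‖y‖) ^ 2 := by positivity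
  rw [hsub, hadd, sin_ang_eq_fin_two b hx hy, rq_sub_rq_of_eigen b h₀ h₁ hx hy, abs_div, abs_div,
    abs_mul (μ - ν), abs_of_pos hxy, abs_of_pos (pow_pos hxy 2)]
  set p := ⟪b 0, x⟫ * ⟪b 1, y⟫
  set q := ⟪b 1, x⟫ * ⟪b 0, y⟫
  constructor
  · calc |μ - ν| * (|(|q| - |p|)| / (‖x‖ * ‖y‖)) * (|p - q| / (‖x‖ * ‖y‖))
        = |μ - ν| / (‖x‖ * ‖y‖) ^ 2 * (|(|q| - |p|)| * |p - q|) := by ring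
      _ ≤ |μ - ν| / (‖x‖ * ‖y‖) ^ 2 * |p ^ 2 - q ^ 2| := by
        gcongr; exact abs_abs_sub_abs_mul_abs_sub_le_abs_sq_sub_sq p q
      _ = |μ - ν| * |p ^ 2 - q ^ 2| / (‖x‖ * ‖y‖) ^ 2 := by ring
  · calc |μ - ν| * |p ^ 2 - q ^ 2| / (‖x‖ * ‖y‖) ^ 2
        = |μ - ν| / (‖x‖ * ‖y‖) ^ 2 * |p ^ 2 - q ^ 2| := by ring
      _ ≤ |μ - ν| / (‖x‖ * ‖y‖) ^ 2 * ((|q| + |p|) * |p - q|) := by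
        gcongr; exact abs_sq_sub_sq_le_add_mul_abs_sub p q
      _ = |μ - ν| * ((|q| + |p|) / (‖x‖ * ‖y‖)) * (|p - q| / (‖x‖ * ‖y‖)) := by ring

end OrthonormalBasis

theorem stmt_11_general (hdim : Module.finrank ℝ H = 2)
    (A : H →L[ℝ] H)
    (lmax lmin : ℝ) (hl : lmin ≤ lmax) (u₁ u₂ : H) (hu₁ : ‖u₁‖ = 1) (hu₂ : ‖u₂‖ = 1)
    (horth : ⟪u₁, u₂⟫ = 0) (he₁ : A u₁ = lmax • u₁) (he₂ : A u₂ = lmin • u₂)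
    (u : H) (hu : u = u₁ ∨ u = u₂)
    (x y : H) (hx : x ≠ 0) (hy : y ≠ 0) :
    (lmax - lmin) * |Real.sin (ang x u - ang y u)| * Real.sin (ang x y)
        ≤ |rq A x - rq A y| ∧
    |rq A x - rq A y|
        ≤ (lmax - lmin) * Real.sin (ang x u + ang y u) * Real.sin (ang x y) := by
  have hgap : |lmax - lmin| = lmax - lmin := abs_of_nonneg (sub_nonneg.2 hl)
  rcases hu with rfl | rfl
  · obtain ⟨b, rfl, rfl⟩ := exists_orthonormalBasis_fin_two hdim hu₁ hu₂ horth
    simpa only [hgap] using abs_rq_sub_rq_bounds_of_eigen b he₁ he₂ hx hy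
  · obtain ⟨b, rfl, rfl⟩ :=
      exists_orthonormalBasis_fin_two hdim hu₂ hu₁ (by rwa [real_inner_comm])
    simpa only [abs_sub_comm lmin, hgap] using abs_rq_sub_rq_bounds_of_eigen b he₂ he₁ hx hy

/-- In a two-dimensional space with eigenvalues `λ_max ≥ λ_min` of a self-adjoint `A` and a
unit eigenvector `u` (for either eigenvalue), for nonzero `x, y` with `∠{x,y} > 0`:
`(λmax − λmin)·|sin(∠{x,u} − ∠{y,u})|·sin∠{x,y} ≤ |ρ(x) − ρ(y)|
  ≤ (λmax − λmin)·sin(∠{x,u} + ∠{y,u})·sin∠{x,y}`. -/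
theorem stmt_11 [FiniteDimensional ℝ H] (hdim : Module.finrank ℝ H = 2)
    (A : H →L[ℝ] H) (hA : IsSelfAdjoint A)
    (lmax lmin : ℝ) (hl : lmin ≤ lmax) (u₁ u₂ : H) (hu₁ : ‖u₁‖ = 1) (hu₂ : ‖u₂‖ = 1)
    (horth : ⟪u₁, u₂⟫ = 0) (he₁ : A u₁ = lmax • u₁) (he₂ : A u₂ = lmin • u₂)
    (u : H) (hu : u = u₁ ∨ u = u₂)
    (x y : H) (hx : x ≠ 0) (hy : y ≠ 0) (hang : 0 < ang x y) :
    (lmax - lmin) * |Real.sin (ang x u - ang y u)| * Real.sin (ang x y)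
        ≤ |rq A x - rq A y| ∧
    |rq A x - rq A y|
        ≤ (lmax - lmin) * Real.sin (ang x u + ang y u) * Real.sin (ang x y) :=
  stmt_11_general hdim A lmax lmin hl u₁ u₂ hu₁ hu₂ horth he₁ he₂ u hu x y hx hy
end
end

section
/- Let A be a bounded self-adjoint operator, x an eigenvector of A with eigenvalue λ = ρ(x), and y a nonzero vector linearly independent of x. Let S = span{x,y} and A_S the compression of A to S. Then |λ − ρ(y)| = (λ_max(A_S) − λ_min(A_S))·sin²(∠{x,y}). -/
/-! Write `x = a u₁ + b u₂` and `y = c u₁ + d u₂` in the orthonormal eigenbasis of the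
compression. Since `A x = λ x` lies in `S`, projecting onto `S` gives `a μ = λ a` and `b ν = λ b`:
either `λ = μ` and `b = 0`, or `λ = ν` and `a = 0`, or `μ = ν = λ`. As
`ρ(y) = (μ c² + ν d²) / (c² + d²)` and `sin² ∠{x,y} = 1 - (a c + b d)² / ((a² + b²)(c² + d²))`,
the identity is then a computation in each case. -/

open scoped RealInnerProductSpace
open Submodule

noncomputable section

variable {H : Type*} [NormedAddCommGroup H] [InnerProductSpace ℝ H]

theorem Submodule.span_pair_eq_of_linearIndependent {K M : Type*} [DivisionRing K]
    [AddCommGroup M] [Module K M] {x y u₁ u₂ : M} (hu : LinearIndependent K ![u₁, u₂])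
    (hu₁ : u₁ ∈ span K {x, y}) (hu₂ : u₂ ∈ span K {x, y}) :
    span K {u₁, u₂} = span K {x, y} := by
  have : FiniteDimensional K (span K {x, y}) := .span_of_finite K (Set.toFinite _)
  refine eq_of_le_of_finrank_le (span_le.mpr (Set.pair_subset hu₁ hu₂)) ?_
  rw [← Matrix.range_cons_cons_empty x y ![], ← Matrix.range_cons_cons_empty u₁ u₂ ![],
    finrank_span_eq_card hu]
  exact finrank_range_le_card _

theorem sin_ang_sq (x y : H) :
    Real.sin (ang x y) ^ 2 = 1 - ⟪x, y⟫ ^ 2 / (‖x‖ ^ 2 * ‖y‖ ^ 2) := by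
  have hle : (|⟪x, y⟫| / (‖x‖ * ‖y‖)) ^ 2 ≤ 1 := by
    have := abs_real_inner_div_norm_mul_norm_le_one x y
    rw [abs_div, abs_mul, abs_norm, abs_norm] at this
    exact pow_le_one₀ (by positivity) this
  rw [ang, Real.sin_arccos, Real.sq_sqrt (sub_nonneg.mpr hle), div_pow, sq_abs, mul_pow]

theorem Submodule.inner_starProjection_of_mem_left {S : Submodule ℝ H}
    [S.HasOrthogonalProjection] {v : H} (hv : v ∈ S) (w : H) :
    ⟪v, S.starProjection w⟫ = ⟪v, w⟫ := by
  rw [← inner_starProjection_left_eq_right, starProjection_eq_self_iff.mpr hv]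

theorem inner_smul_add_smul {u₁ u₂ : H} (hu₁ : ‖u₁‖ = 1) (hu₂ : ‖u₂‖ = 1)
    (horth : ⟪u₁, u₂⟫ = 0) (a b c d : ℝ) :
    ⟪a • u₁ + b • u₂, c • u₁ + d • u₂⟫ = a * c + b * d := by
  simp only [inner_add_left, inner_add_right, real_inner_smul_left, real_inner_smul_right,
    real_inner_self_eq_norm_sq, hu₁, hu₂, horth, real_inner_comm u₁ u₂]
  ring

theorem linearIndependent_of_orthonormal_pair {u₁ u₂ : H} (hu₁ : ‖u₁‖ = 1) (hu₂ : ‖u₂‖ = 1)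
    (horth : ⟪u₁, u₂⟫ = 0) : LinearIndependent ℝ ![u₁, u₂] := by
  refine LinearIndependent.pair_iff.mpr fun s t h => ?_
  have hnorm := inner_smul_add_smul hu₁ hu₂ horth s t s t
  rw [h, inner_zero_left] at hnorm
  constructor <;> nlinarith

theorem abs_sub_rayleigh_diag {μ ν lam a b c d : ℝ} (hμν : ν ≤ μ) (hab : 0 < a ^ 2 + b ^ 2)
    (hcd : 0 < c ^ 2 + d ^ 2) (hea : a * μ = lam * a) (heb : b * ν = lam * b) :
    |lam - (μ * c ^ 2 + ν * d ^ 2) / (c ^ 2 + d ^ 2)| =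
      (μ - ν) * (1 - (a * c + b * d) ^ 2 / ((a ^ 2 + b ^ 2) * (c ^ 2 + d ^ 2))) := by
  have hμν' : 0 ≤ μ - ν := sub_nonneg.mpr hμν
  rcases eq_or_ne b 0 with rfl | hb
  · have ha : a ≠ 0 := by rintro rfl; simp at hab
    obtain rfl : μ = lam := mul_left_cancel₀ ha (hea.trans (mul_comm _ _))
    have hdiff : μ - (μ * c ^ 2 + ν * d ^ 2) / (c ^ 2 + d ^ 2) =
        (μ - ν) * d ^ 2 / (c ^ 2 + d ^ 2) := by
      field_simp
      ring
    rw [hdiff, abs_of_nonneg (div_nonneg (mul_nonneg hμν' (sq_nonneg d)) hcd.le)]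
    field_simp
    ring
  obtain rfl : ν = lam := mul_left_cancel₀ hb (heb.trans (mul_comm _ _))
  rcases eq_or_ne a 0 with rfl | ha
  · have hdiff : ν - (μ * c ^ 2 + ν * d ^ 2) / (c ^ 2 + d ^ 2) =
        -((μ - ν) * c ^ 2 / (c ^ 2 + d ^ 2)) := by
      field_simp
      ring
    rw [hdiff, abs_neg, abs_of_nonneg (div_nonneg (mul_nonneg hμν' (sq_nonneg c)) hcd.le)]
    field_simp
    ring
  · obtain rfl : μ = ν := mul_left_cancel₀ ha (hea.trans (mul_comm _ _))
    rw [← mul_add, mul_div_cancel_right₀ _ hcd.ne', sub_self, abs_zero, zero_mul]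

theorem stmt_13_general (A : H →L[ℝ] H)
    (lam : ℝ) (x : H) (hx : x ≠ 0) (heig : A x = lam • x)
    (y : H) (hy : y ≠ 0)
    (S : Submodule ℝ H) [FiniteDimensional ℝ S]
    (hS : S = Submodule.span ℝ ({x, y} : Set H))
    (μ ν : ℝ) (hμν : ν ≤ μ) (u₁ u₂ : H) (hu₁S : u₁ ∈ S) (hu₂S : u₂ ∈ S)
    (hu₁ : ‖u₁‖ = 1) (hu₂ : ‖u₂‖ = 1) (horth : ⟪u₁, u₂⟫ = 0)
    (he₁ : (orthogonalProjection S (A u₁) : H) = μ • u₁)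
    (he₂ : (orthogonalProjection S (A u₂) : H) = ν • u₂) :
    |lam - rq A y| = (μ - ν) * Real.sin (ang x y) ^ 2 := by
  rw [← starProjection_apply] at he₁ he₂
  have hcompr (p q : ℝ) :
      S.starProjection (A (p • u₁ + q • u₂)) = (p * μ) • u₁ + (q * ν) • u₂ := by
    simp only [map_add, map_smul, he₁, he₂, smul_smul]
  have hind := linearIndependent_of_orthonormal_pair hu₁ hu₂ horth
  have hinner := inner_smul_add_smul hu₁ hu₂ horth
  have hxS : x ∈ S := hS ▸ subset_span (by simp)
  have hyS : y ∈ S := hS ▸ subset_span (by simp)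
  have hspan : span ℝ {u₁, u₂} = S :=
    hS ▸ span_pair_eq_of_linearIndependent hind (hS ▸ hu₁S) (hS ▸ hu₂S)
  obtain ⟨a, b, rfl⟩ := mem_span_pair.mp (hspan ▸ hxS)
  obtain ⟨c, d, rfl⟩ := mem_span_pair.mp (hspan ▸ hyS)
  obtain ⟨hea, heb⟩ : a * μ = lam * a ∧ b * ν = lam * b := by
    refine hind.eq_of_pair ?_
    rw [← hcompr, heig, starProjection_eq_self_iff.mpr (smul_mem _ _ hxS), smul_add, smul_smul,
      smul_smul]
  have hyAy : ⟪c • u₁ + d • u₂, A (c • u₁ + d • u₂)⟫ = μ * c ^ 2 + ν * d ^ 2 := by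
    rw [← inner_starProjection_of_mem_left hyS, hcompr, hinner]
    ring
  have hab : 0 < a ^ 2 + b ^ 2 := by
    simpa only [hinner, sq] using real_inner_self_pos.mpr hx
  have hcd : 0 < c ^ 2 + d ^ 2 := by
    simpa only [hinner, sq] using real_inner_self_pos.mpr hy
  rw [rq, hyAy, sin_ang_sq, ← real_inner_self_eq_norm_sq, ← real_inner_self_eq_norm_sq,
    hinner, hinner, hinner, ← sq, ← sq, ← sq, ← sq]
  exact abs_sub_rayleigh_diag hμν hab hcd hea heb

/-- If `x` is an eigenvector of `A` with eigenvalue `λ = ρ(x)`, `y` is a nonzero vector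
linearly independent of `x`, `S = span{x,y}`, and `μ ≥ ν` are the two eigenvalues of the
compression `A_S` (with orthonormal eigenvectors `u₁, u₂ ∈ S`), then
`|λ − ρ(y)| = (λ_max(A_S) − λ_min(A_S))·sin²∠{x,y}`. -/
theorem stmt_13 [CompleteSpace H] (A : H →L[ℝ] H) (hA : IsSelfAdjoint A)
    (lam : ℝ) (x : H) (hx : x ≠ 0) (heig : A x = lam • x)
    (y : H) (hy : y ≠ 0) (hli : LinearIndependent ℝ ![x, y])
    (S : Submodule ℝ H) [FiniteDimensional ℝ S]
    (hS : S = Submodule.span ℝ ({x, y} : Set H))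
    (μ ν : ℝ) (hμν : ν ≤ μ) (u₁ u₂ : H) (hu₁S : u₁ ∈ S) (hu₂S : u₂ ∈ S)
    (hu₁ : ‖u₁‖ = 1) (hu₂ : ‖u₂‖ = 1) (horth : ⟪u₁, u₂⟫ = 0)
    (he₁ : (orthogonalProjection S (A u₁) : H) = μ • u₁)
    (he₂ : (orthogonalProjection S (A u₂) : H) = ν • u₂) :
    |lam - rq A y| = (μ - ν) * Real.sin (ang x y) ^ 2 :=
  stmt_13_general A lam x hx heig y hy S hS μ ν hμν u₁ u₂ hu₁S hu₂S hu₁ hu₂ horth he₁ he₂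
end
end

section
/- Let A be a bounded self-adjoint operator, x an eigenvector with eigenvalue λ, and y a nonzero vector with 0 < ∠{x,y} < π/2. Then |λ − ρ(y)| ≤ (‖r(y)‖/‖y‖)·tan(∠{x,y}), where r(y) = Ay − ρ(y)y. Moreover, equality holds if and only if span{x,y} is A-invariant. -/
open scoped RealInnerProductSpace
open Submodule

noncomputable section

variable {H : Type*} [NormedAddCommGroup H] [InnerProductSpace ℝ H]

/-! Let `u` be the component of `x` orthogonal to `y`. Since `r(y) ⊥ y` and `A` is symmetric,
`⟪u, r(y)⟫ = ⟪x, r(y)⟫ = (λ - ρ(y)) ⟪x, y⟫`, while `‖u‖ ‖y‖ = tan ∠{x,y} · |⟪x, y⟫|`. So the bound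
is Cauchy–Schwarz for `⟪u, r(y)⟫`, with equality iff `r(y) ∈ ℝ u`; as `r(y) ⊥ y`, this means
`r(y) ∈ span{x, y}`, that is `A y ∈ span{x, y}`. -/

open InnerProductGeometry

theorem real_inner_self_res (A : H →L[ℝ] H) (y : H) : ⟪y, res A y⟫ = 0 := by
  rcases eq_or_ne y 0 with rfl | hy
  · simp
  rw [res, rq, inner_sub_right, real_inner_smul_right,
    div_mul_cancel₀ _ (inner_self_ne_zero.2 hy), sub_self]

theorem res_mem_orthogonal_singleton (A : H →L[ℝ] H) (y : H) : res A y ∈ (ℝ ∙ y)ᗮ :=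
  mem_orthogonal_singleton_iff_inner_right.2 (real_inner_self_res A y)

theorem real_inner_res_of_apply_eq_smul {A : H →L[ℝ] H} (hA : (A : H →ₗ[ℝ] H).IsSymmetric)
    {lam : ℝ} {x : H} (heig : A x = lam • x) (y : H) :
    ⟪x, res A y⟫ = (lam - rq A y) * ⟪x, y⟫ := by
  have hAxy : ⟪x, A y⟫ = lam * ⟪x, y⟫ := by
    rw [← ContinuousLinearMap.coe_coe, ← hA, ContinuousLinearMap.coe_coe, heig,
      real_inner_smul_left]
  rw [res, inner_sub_right, real_inner_smul_right, hAxy]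
  ring

theorem sin_ang (x y : H) : Real.sin (ang x y) = Real.sin (angle x y) := by
  rw [ang, angle, Real.sin_arccos, Real.sin_arccos, div_pow, sq_abs, div_pow]

theorem cos_ang_mul_norm_mul_norm (x y : H) :
    Real.cos (ang x y) * (‖x‖ * ‖y‖) = |⟪x, y⟫| := by
  have hle : |⟪x, y⟫| / (‖x‖ * ‖y‖) ≤ 1 := by
    simpa [abs_div, abs_mul] using abs_real_inner_div_norm_mul_norm_le_one x y
  rw [ang, Real.cos_arccos (by linarith [show 0 ≤ |⟪x, y⟫| / (‖x‖ * ‖y‖) by positivity]) hle,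
    div_mul_cancel_of_imp]
  intro h
  rcases mul_eq_zero.1 h with h | h <;> simp [norm_eq_zero.1 h]

theorem tan_ang_mul_abs_inner {x y : H} (hxy : ⟪x, y⟫ ≠ 0) :
    Real.tan (ang x y) * |⟪x, y⟫| = Real.sin (angle x y) * (‖x‖ * ‖y‖) := by
  have hcos := cos_ang_mul_norm_mul_norm x y
  have hcos₀ : Real.cos (ang x y) ≠ 0 := by
    rintro h
    rw [h, zero_mul] at hcos
    exact hxy (abs_eq_zero.1 hcos.symm)
  rw [← hcos, ← sin_ang, Real.tan_eq_sin_div_cos]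
  field_simp

theorem norm_starProjection_singleton_mul_norm (x y : H) :
    ‖(ℝ ∙ y).starProjection x‖ * ‖y‖ = |⟪x, y⟫| := by
  rcases eq_or_ne y 0 with rfl | hy
  · simp
  simp only [starProjection_singleton, norm_smul, RCLike.ofReal_real_eq_id, id, norm_div,
    norm_pow, Real.norm_eq_abs, abs_norm, real_inner_comm y]
  field_simp

theorem norm_starProjection_orthogonal_singleton_mul_norm (x y : H) :
    ‖(ℝ ∙ y)ᗮ.starProjection x‖ * ‖y‖ = Real.sin (angle x y) * (‖x‖ * ‖y‖) := by
  have hpyth := norm_sq_eq_add_norm_sq_starProjection x (ℝ ∙ y)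
  have hproj : (‖(ℝ ∙ y).starProjection x‖ * ‖y‖) ^ 2 = ⟪x, y⟫ ^ 2 := by
    rw [norm_starProjection_singleton_mul_norm, sq_abs]
  have hcos : (Real.cos (angle x y) * (‖x‖ * ‖y‖)) ^ 2 = ⟪x, y⟫ ^ 2 := by
    rw [cos_angle_mul_norm_mul_norm]
  have hsin := sin_angle_nonneg x y
  refine (sq_eq_sq₀ (by positivity) (by positivity)).1 ?_
  linear_combination (-‖y‖ ^ 2) * hpyth - hproj + hcos -
    ‖x‖ ^ 2 * ‖y‖ ^ 2 * Real.sin_sq_add_cos_sq (angle x y)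

theorem mem_span_singleton_starProjection_iff {r : H} (x : H) {y : H} (hr : r ∈ (ℝ ∙ y)ᗮ) :
    r ∈ ℝ ∙ (ℝ ∙ y)ᗮ.starProjection x ↔ r ∈ span ℝ {x, y} := by
  constructor
  · refine fun h => span_singleton_le_iff_mem _ _ |>.2 ?_ h
    rw [starProjection_orthogonal_val]
    refine sub_mem (subset_span (Set.mem_insert x _)) (span_mono ?_ (starProjection_apply_mem _ x))
    exact Set.singleton_subset_iff.2 (Set.mem_insert_of_mem x rfl)
  · intro h
    obtain ⟨a, b, rfl⟩ := mem_span_pair.1 h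
    rw [← starProjection_eq_self_iff.2 hr, map_add, map_smul, map_smul,
      starProjection_orthogonalComplement_singleton_eq_zero, smul_zero, add_zero]
    exact smul_mem _ a (mem_span_singleton_self _)

theorem forall_map_mem_span_pair_iff {R M : Type*} [Semiring R] [AddCommMonoid M] [Module R M]
    (f : M →ₗ[R] M) {c : R} {x : M} (hx : f x = c • x) (y : M) :
    (∀ z ∈ span R {x, y}, f z ∈ span R {x, y}) ↔ f y ∈ span R {x, y} := by
  refine ⟨fun h => h y (subset_span (Set.mem_insert_of_mem x rfl)), fun hy z hz => ?_⟩
  refine (span_le (p := (span R {x, y}).comap f)).2 ?_ hz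
  refine Set.insert_subset_iff.2 ⟨?_, Set.singleton_subset_iff.2 hy⟩
  rw [SetLike.mem_coe, mem_comap, hx]
  exact smul_mem _ c (subset_span (Set.mem_insert x _))

theorem inner_ne_zero_of_ang_lt_pi_div_two {x y : H} (h : ang x y < Real.pi / 2) : ⟪x, y⟫ ≠ 0 := by
  intro hxy
  simp [ang, hxy] at h

theorem abs_sub_rq_mul_abs_inner {A : H →L[ℝ] H} (hA : (A : H →ₗ[ℝ] H).IsSymmetric) {lam : ℝ}
    {x : H} (heig : A x = lam • x) (y : H) :
    |lam - rq A y| * |⟪x, y⟫| = |⟪(ℝ ∙ y)ᗮ.starProjection x, res A y⟫| := by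
  rw [inner_starProjection_left_eq_right,
    starProjection_eq_self_iff.2 (res_mem_orthogonal_singleton A y),
    real_inner_res_of_apply_eq_smul hA heig, abs_mul]

theorem stmt_16_general [CompleteSpace H] (A : H →L[ℝ] H) (hA : IsSelfAdjoint A)
    (lam : ℝ) (x : H) (heig : A x = lam • x)
    (y : H)
    (hang₀ : 0 < ang x y) (hang₁ : ang x y < Real.pi / 2) :
    |lam - rq A y| ≤ ‖res A y‖ / ‖y‖ * Real.tan (ang x y) ∧
    (|lam - rq A y| = ‖res A y‖ / ‖y‖ * Real.tan (ang x y) ↔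
      ∀ z ∈ Submodule.span ℝ ({x, y} : Set H),
        A z ∈ Submodule.span ℝ ({x, y} : Set H)) := by
  set u := (ℝ ∙ y)ᗮ.starProjection x
  have hxy := inner_ne_zero_of_ang_lt_pi_div_two hang₁
  have hα : 0 < |⟪x, y⟫| := abs_pos.2 hxy
  have hy : y ≠ 0 := by rintro rfl; simp at hxy
  have hu_norm : ‖u‖ * ‖y‖ = Real.tan (ang x y) * |⟪x, y⟫| := by
    rw [norm_starProjection_orthogonal_singleton_mul_norm, tan_ang_mul_abs_inner hxy]
  have hu : u ≠ 0 := by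
    rintro hu
    rw [hu, norm_zero, zero_mul] at hu_norm
    exact (mul_pos (Real.tan_pos_of_pos_of_lt_pi_div_two hang₀ hang₁) hα).ne' hu_norm.symm
  have hlhs := abs_sub_rq_mul_abs_inner hA.isSymmetric heig y
  have hrhs : ‖res A y‖ / ‖y‖ * Real.tan (ang x y) * |⟪x, y⟫| = ‖u‖ * ‖res A y‖ := by
    rw [mul_assoc, ← hu_norm]
    field_simp [norm_ne_zero_iff.2 hy]
  refine ⟨?_, ?_⟩
  · rw [← mul_le_mul_iff_of_pos_right hα, hlhs, hrhs]
    exact abs_real_inner_le_norm u _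
  · have hres := res_mem_orthogonal_singleton A y
    have hCS : ‖⟪u, res A y⟫‖ = ‖u‖ * ‖res A y‖ ↔ u = 0 ∨ res A y ∈ ℝ ∙ u :=
      (norm_inner_eq_norm_tfae ℝ u _).out 0 3
    rw [← mul_left_inj' hα.ne', hlhs, hrhs, ← Real.norm_eq_abs, hCS, or_iff_right hu,
      mem_span_singleton_starProjection_iff x hres, res,
      sub_mem_iff_left _ (smul_mem _ _ (subset_span (by simp)))]
    exact (forall_map_mem_span_pair_iff (A : H →ₗ[ℝ] H) heig y).symm

/-- Mixed bound: if `x` is an eigenvector of `A` with eigenvalue `λ` and `y ≠ 0` with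
`0 < ∠{x,y} < π/2`, then `|λ − ρ(y)| ≤ (‖r(y)‖/‖y‖)·tan∠{x,y}`, with equality if and only
if `span{x,y}` is `A`-invariant. -/
theorem stmt_16 [CompleteSpace H] (A : H →L[ℝ] H) (hA : IsSelfAdjoint A)
    (lam : ℝ) (x : H) (hx : x ≠ 0) (heig : A x = lam • x)
    (y : H) (hy : y ≠ 0)
    (hang₀ : 0 < ang x y) (hang₁ : ang x y < Real.pi / 2) :
    |lam - rq A y| ≤ ‖res A y‖ / ‖y‖ * Real.tan (ang x y) ∧
    (|lam - rq A y| = ‖res A y‖ / ‖y‖ * Real.tan (ang x y) ↔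
      ∀ z ∈ Submodule.span ℝ ({x, y} : Set H),
        A z ∈ Submodule.span ℝ ({x, y} : Set H)) :=
  stmt_16_general A hA lam x heig y hang₀ hang₁
end
end

section
/- Temple's inequality: Let A be a bounded self-adjoint operator (or Hermitian matrix) and α < β real numbers such that the spectrum of A has empty intersection with the open interval (α, β). Then for every nonzero vector y, (β − ρ(y))(ρ(y) − α) ≤ ‖r(y)‖²/‖y‖², where ρ(y) = ⟨y,Ay⟩/⟨y,y⟩ and r(y) = Ay − ρ(y)y. -/
/-! Shift `A` by the midpoint `μ = (α + β) / 2`. The spectrum of `T = A - μ` avoids `(-d, d)`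
with `d = (β - α) / 2`, and this forces `‖T y‖ ≥ d ‖y‖`, i.e.
`⟪(A - α) y, (A - β) y⟫ = ‖T y‖² - d² ‖y‖² ≥ 0`, which rearranges to Temple's inequality.

The bound comes from the minimum modulus `m = inf_{‖z‖ = 1} ‖T z‖`: the operator
`T² - m² = (m - T)(-m - T)` is positive but not coercive, whereas a positive invertible operator
is coercive (Cauchy–Schwarz for the form `⟪C ·, ·⟫` gives `‖C x‖² ≤ ‖C‖ ⟪C x, x⟫`). Hence `m` or
`-m` lies in the spectrum of `T`, so `m ≥ d`. -/

open scoped RealInnerProductSpace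
open Submodule

noncomputable section

variable {H : Type*} [NormedAddCommGroup H] [InnerProductSpace ℝ H]

namespace ContinuousLinearMap

theorem IsPositive.norm_map_sq_le {C : H →L[ℝ] H} (hC : C.IsPositive) (x : H) :
    ‖C x‖ ^ 2 ≤ ‖C‖ * ⟪C x, x⟫ := by
  have hsymm : ∀ a b, ⟪C a, b⟫ = ⟪a, C b⟫ := hC.isSymmetric
  have hcs := LinearMap.BilinForm.apply_mul_apply_le_of_forall_zero_le
    ((innerₗ H).comp (C : H →ₗ[ℝ] H)) hC.inner_nonneg_left x (C x)
  simp only [LinearMap.comp_apply, innerₗ_apply_apply, coe_coe] at hcs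
  rw [hsymm (C x) x, real_inner_self_eq_norm_sq] at hcs
  have hCCx : ⟪C (C x), C x⟫ ≤ ‖C‖ * ‖C x‖ ^ 2 :=
    calc ⟪C (C x), C x⟫ ≤ ‖C (C x)‖ * ‖C x‖ := real_inner_le_norm _ _
      _ ≤ ‖C‖ * ‖C x‖ * ‖C x‖ := by gcongr; exact C.le_opNorm _
      _ = ‖C‖ * ‖C x‖ ^ 2 := by ring
  rcases (sq_nonneg ‖C x‖).eq_or_lt with h0 | hpos
  · rw [← h0]; exact mul_nonneg (norm_nonneg C) (hC.inner_nonneg_left x)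
  · nlinarith [mul_le_mul_of_nonneg_left hCCx (hC.inner_nonneg_left x)]

theorem IsPositive.exists_pos_mul_norm_sq_le_of_isUnit {C : H →L[ℝ] H} (hC : C.IsPositive)
    (hu : IsUnit C) : ∃ c > 0, ∀ x, c * ‖x‖ ^ 2 ≤ ⟪C x, x⟫ := by
  obtain ⟨K, hK⟩ : ∃ K, ∀ x, ‖x‖ ≤ K * ‖C x‖ := by
    obtain ⟨u, rfl⟩ := hu
    refine ⟨‖(↑u⁻¹ : H →L[ℝ] H)‖, fun x => ?_⟩
    calc ‖x‖ = ‖(↑u⁻¹ : H →L[ℝ] H) ((u : H →L[ℝ] H) x)‖ := by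
          change ‖x‖ = ‖(↑u⁻¹ * ↑u : H →L[ℝ] H) x‖; rw [Units.inv_mul]; rfl
      _ ≤ _ := le_opNorm _ _
  refine ⟨(K ^ 2 * ‖C‖ + 1)⁻¹, by positivity, fun x => ?_⟩
  have hx : ‖x‖ ^ 2 ≤ K ^ 2 * ‖C‖ * ⟪C x, x⟫ :=
    calc ‖x‖ ^ 2 ≤ K ^ 2 * ‖C x‖ ^ 2 := by
          rw [← mul_pow]; exact pow_le_pow_left₀ (norm_nonneg x) (hK x) 2
      _ ≤ K ^ 2 * (‖C‖ * ⟪C x, x⟫) := by gcongr; exact hC.norm_map_sq_le x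
      _ = _ := by ring
  rw [inv_mul_le_iff₀ (by positivity)]
  nlinarith [hC.inner_nonneg_left x]

def minModulus (T : H →L[ℝ] H) : ℝ := ⨅ z : Metric.sphere (0 : H) 1, ‖T z‖

lemma minModulus_nonneg (T : H →L[ℝ] H) : 0 ≤ minModulus T :=
  Real.iInf_nonneg fun _ => norm_nonneg _

lemma minModulus_mul_norm_le (T : H →L[ℝ] H) (x : H) : minModulus T * ‖x‖ ≤ ‖T x‖ := by
  rcases eq_or_ne x 0 with rfl | hx
  · simp
  have hbdd : BddBelow (Set.range fun z : Metric.sphere (0 : H) 1 => ‖T z‖) :=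
    ⟨0, by rintro _ ⟨z, rfl⟩; positivity⟩
  have hunit : ‖x‖⁻¹ • x ∈ Metric.sphere (0 : H) 1 := by simp [norm_smul, hx]
  have h := ciInf_le hbdd ⟨_, hunit⟩
  rw [map_smul, norm_smul, norm_inv, norm_norm, ← div_eq_inv_mul,
    le_div_iff₀ (norm_pos_iff.2 hx)] at h
  exact h

end ContinuousLinearMap

open ContinuousLinearMap in
theorem IsSelfAdjoint.minModulus_mem_spectrum [CompleteSpace H] [Nontrivial H]
    {T : H →L[ℝ] H} (hT : IsSelfAdjoint T) :
    minModulus T ∈ spectrum ℝ T ∨ -minModulus T ∈ spectrum ℝ T := by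
  have hT_symm : ∀ a b, ⟪T a, b⟫ = ⟪a, T b⟫ := hT.isSymmetric
  set m := minModulus T
  by_contra! hm
  obtain ⟨hm₁, hm₂⟩ := hm
  rw [spectrum.notMem_iff] at hm₁ hm₂
  set C := T * T - algebraMap ℝ (H →L[ℝ] H) (m ^ 2)
  have hC_apply : ∀ x, C x = T (T x) - m ^ 2 • x := fun x => by
    simp [C, Algebra.algebraMap_eq_smul_one]
  have hC_unit : IsUnit C := by
    convert hm₁.mul hm₂ using 1
    ext x
    simp only [hC_apply, Algebra.algebraMap_eq_smul_one, mul_apply_eq_comp, sub_apply,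
      neg_apply, smul_apply, one_apply_eq_self, map_sub, map_neg, map_smul]
    module
  have hC_inner : ∀ x, ⟪C x, x⟫ = ‖T x‖ ^ 2 - m ^ 2 * ‖x‖ ^ 2 := fun x => by
    rw [hC_apply, inner_sub_left, real_inner_smul_left, hT_symm,
      real_inner_self_eq_norm_sq, real_inner_self_eq_norm_sq]
  have hC_pos : C.IsPositive := by
    refine (isPositive_iff' C).2 ⟨?_, fun x => ?_⟩
    · simpa only [hT.star_eq] using (IsSelfAdjoint.star_mul_self T).sub (.algebraMap _ (.all _))
    rw [hC_inner, ← mul_pow, sub_nonneg]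
    exact pow_le_pow_left₀ (mul_nonneg (minModulus_nonneg T) (norm_nonneg x))
      (minModulus_mul_norm_le T x) 2
  obtain ⟨c, hc, hC_coercive⟩ := hC_pos.exists_pos_mul_norm_sq_le_of_isUnit hC_unit
  have : Nonempty (Metric.sphere (0 : H) 1) :=
    (NormedSpace.sphere_nonempty.2 zero_le_one).to_subtype
  obtain ⟨⟨z, hz⟩, hz_lt⟩ := exists_lt_of_ciInf_lt
    ((Real.lt_sqrt (minModulus_nonneg T)).2 (lt_add_of_pos_right (m ^ 2) hc))
  rw [mem_sphere_zero_iff_norm] at hz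
  have h₁ := hC_coercive z
  have h₂ := (Real.lt_sqrt (norm_nonneg _)).1 hz_lt
  rw [hC_inner, hz] at h₁
  linarith

open ContinuousLinearMap in
theorem IsSelfAdjoint.mul_norm_le_norm_map_of_forall_le_abs [CompleteSpace H]
    {T : H →L[ℝ] H} (hT : IsSelfAdjoint T) {d : ℝ} (hd : ∀ t ∈ spectrum ℝ T, d ≤ |t|) (x : H) :
    d * ‖x‖ ≤ ‖T x‖ := by
  rcases eq_or_ne x 0 with rfl | hx
  · simp
  have : Nontrivial H := ⟨⟨x, 0, hx⟩⟩
  have hd_le : d ≤ minModulus T := by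
    rcases hT.minModulus_mem_spectrum with h | h <;>
      simpa [abs_of_nonneg (minModulus_nonneg T)] using hd _ h
  calc d * ‖x‖ ≤ minModulus T * ‖x‖ := by gcongr
    _ ≤ ‖T x‖ := minModulus_mul_norm_le T x

theorem IsSelfAdjoint.inner_sub_smul_sub_smul_nonneg [CompleteSpace H] {A : H →L[ℝ] H}
    (hA : IsSelfAdjoint A) {α β : ℝ} (hαβ : α ≤ β) (hgap : spectrum ℝ A ∩ Set.Ioo α β = ∅)
    (y : H) : 0 ≤ ⟪A y - α • y, A y - β • y⟫ := by
  set μ := (α + β) / 2 with hμ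
  set d := (β - α) / 2 with hd_def
  set T := A - algebraMap ℝ (H →L[ℝ] H) μ
  have hT : IsSelfAdjoint T := hA.sub (.algebraMap _ (.all μ))
  have hd : ∀ t ∈ spectrum ℝ T, d ≤ |t| := by
    intro t ht
    rw [← spectrum.sub_singleton_eq] at ht
    obtain ⟨s, hs, _, rfl, rfl⟩ := ht
    change d ≤ |s - μ|
    have hs_gap : s ∉ Set.Ioo α β := fun h => hgap.subset ⟨hs, h⟩
    rw [Set.mem_Ioo, not_and_or, not_lt, not_lt] at hs_gap
    rw [le_abs]
    rcases hs_gap with h | h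
    · right; linarith [hμ, hd_def]
    · left; linarith [hμ, hd_def]
  have hTy : T y = A y - μ • y := by simp [T, Algebra.algebraMap_eq_smul_one]
  have h_diff_sq : ⟪A y - α • y, A y - β • y⟫ = ‖T y‖ ^ 2 - (d * ‖y‖) ^ 2 := by
    rw [show A y - α • y = T y + d • y by rw [hTy]; module,
      show A y - β • y = T y - d • y by rw [hTy]; module,
      inner_add_left, inner_sub_right, inner_sub_right, real_inner_smul_left,
      real_inner_smul_left, real_inner_smul_right, real_inner_smul_right,
      real_inner_comm y, real_inner_self_eq_norm_sq, real_inner_self_eq_norm_sq]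
    ring
  rw [h_diff_sq, sub_nonneg]
  have hd_nonneg : 0 ≤ d := by linarith
  exact pow_le_pow_left₀ (by positivity) (hT.mul_norm_le_norm_map_of_forall_le_abs hd y) 2

lemma rq_mul_norm_sq (A : H →L[ℝ] H) (y : H) : rq A y * ‖y‖ ^ 2 = ⟪y, A y⟫ := by
  rcases eq_or_ne y 0 with rfl | hy
  · simp
  rw [rq, real_inner_self_eq_norm_sq, div_mul_cancel₀ _ (by positivity)]

lemma norm_res_sq_sub_eq_inner (A : H →L[ℝ] H) (α β : ℝ) (y : H) :
    ‖res A y‖ ^ 2 - (β - rq A y) * (rq A y - α) * ‖y‖ ^ 2 = ⟪A y - α • y, A y - β • y⟫ := by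
  have hρ := rq_mul_norm_sq A y
  rw [res, norm_sub_sq_real, inner_sub_left, inner_sub_right, inner_sub_right, norm_smul,
    real_inner_smul_left, real_inner_smul_left, real_inner_smul_right, real_inner_smul_right,
    real_inner_smul_right, real_inner_comm y, real_inner_self_eq_norm_sq,
    real_inner_self_eq_norm_sq, Real.norm_eq_abs, mul_pow, sq_abs]
  linear_combination (2 * rq A y - α - β) * hρ

/-- Temple's inequality: if the spectrum of a bounded self-adjoint `A` does not meet the
open interval `(α, β)`, then for every nonzero `y`:
`(β − ρ(y))(ρ(y) − α) ≤ ‖r(y)‖²/‖y‖²`. -/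
theorem stmt_17 [CompleteSpace H] (A : H →L[ℝ] H) (hA : IsSelfAdjoint A)
    (α β : ℝ) (hαβ : α < β) (hgap : spectrum ℝ A ∩ Set.Ioo α β = ∅)
    (y : H) (hy : y ≠ 0) :
    (β - rq A y) * (rq A y - α) ≤ ‖res A y‖ ^ 2 / ‖y‖ ^ 2 := by
  rw [le_div_iff₀ (by positivity)]
  linarith [norm_res_sq_sub_eq_inner A α β y, hA.inner_sub_smul_sub_smul_nonneg hαβ.le hgap y]
end
end
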